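/- arXiv:1703.09083 — 2 statements merged into one kernel-verified Lean document; each statement's English description precedes it below -/
import Mathlib

section
/- Let (G, ≺) be a stable matching instance, V⁰ the set of vertices unmatched in every stable matching and V¹ the set of vertices matched in every stable matching, and define E¹ = {uv ∈ E : u,v ∈ V¹, and for all w ∈ V⁰ with uw ∈ E, u prefers v over w, and for all w ∈ V⁰ with vw ∈ E, v prefers u over w}, G¹ = (V¹, E¹). Then M is a stable matching of (G, ≺) if and only if M is a perfect stable matching of (G¹, ≺). -/
open SimpleGraph

variable {V : Type*} [Fintype V] [DecidableEq V]

/-- Strict preference lists: `pref v a b` means `v` prefers `a` over `b`. -/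
structure StrictPrefs (G : SimpleGraph V) (pref : V → V → V → Prop) : Prop where
  adj_left : ∀ v a b, pref v a b → G.Adj v a
  adj_right : ∀ v a b, pref v a b → G.Adj v b
  irrefl : ∀ v a, ¬ pref v a a
  trans : ∀ v a b c, pref v a b → pref v b c → pref v a c
  total : ∀ v a b, G.Adj v a → G.Adj v b → a ≠ b → pref v a b ∨ pref v b a

/-- A set of edges is a matching if its edges are pairwise vertex-disjoint. -/
def IsMatch (M : Set (Sym2 V)) : Prop :=
  ∀ e ∈ M, ∀ f ∈ M, ∀ v : V, v ∈ e → v ∈ f → e = f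

/-- `M` covers `v`. -/
def Covers (M : Set (Sym2 V)) (v : V) : Prop := ∃ e ∈ M, v ∈ e

/-- The edge `uv` is blocking for `M`. -/
def Blocks (G : SimpleGraph V) (pref : V → V → V → Prop)
    (M : Set (Sym2 V)) (u v : V) : Prop :=
  G.Adj u v ∧ s(u, v) ∉ M ∧ (∀ w, s(u, w) ∈ M → pref u v w) ∧
    (∀ w, s(v, w) ∈ M → pref v u w)

/-- `M` is a stable matching of `(G, pref)`. -/
def IsStable (G : SimpleGraph V) (pref : V → V → V → Prop) (M : Set (Sym2 V)) : Prop :=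
  IsMatch M ∧ M ⊆ G.edgeSet ∧ ∀ u v, ¬ Blocks G pref M u v

/-- `Phi G pref u v` is the set of edges dominating the edge `uv` at one of its
endpoints, together with `uv` itself. -/
def Phi (G : SimpleGraph V) (pref : V → V → V → Prop) (u v : V) : Set (Sym2 V) :=
  {f | f ∈ G.edgeSet ∧ (f = s(u, v) ∨ (∃ w, f = s(u, w) ∧ pref u w v)
      ∨ (∃ w, f = s(v, w) ∧ pref v w u))}

/-- The set of edges appearing in some stable matching. -/
def EMset (G : SimpleGraph V) (pref : V → V → V → Prop) : Set (Sym2 V) :=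
  {e | ∃ M, IsStable G pref M ∧ e ∈ M}

open scoped Classical in
/-- `x(δ(v))`. -/
noncomputable def degSum (G : SimpleGraph V) (x : Sym2 V → ℝ) (v : V) : ℝ :=
  ∑ e ∈ G.edgeFinset, if v ∈ e then x e else 0

open scoped Classical in
/-- `x(φ(uv))`. -/
noncomputable def phiSum (G : SimpleGraph V) (pref : V → V → V → Prop)
    (x : Sym2 V → ℝ) (u v : V) : ℝ :=
  ∑ e ∈ G.edgeFinset, if e ∈ Phi G pref u v then x e else 0

/-- Membership in the fractional stable matching polytope `FSM(G, pref)`. -/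
def InFSM (G : SimpleGraph V) (pref : V → V → V → Prop) (x : Sym2 V → ℝ) : Prop :=
  (∀ e, 0 ≤ x e) ∧ (∀ e, e ∉ G.edgeSet → x e = 0) ∧
  (∀ v, degSum G x v ≤ 1) ∧ (∀ u v, G.Adj u v → 1 ≤ phiSum G pref x u v)

/-- `v` is matched in every stable matching. -/
def InV1 (G : SimpleGraph V) (pref : V → V → V → Prop) (v : V) : Prop :=
  ∀ M, IsStable G pref M → Covers M v

/-- `v` is unmatched in every stable matching. -/
def InV0 (G : SimpleGraph V) (pref : V → V → V → Prop) (v : V) : Prop :=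
  ∀ M, IsStable G pref M → ¬ Covers M v

/-- The edge set `E¹` of the reduced instance `G¹`. -/
def E1set (G : SimpleGraph V) (pref : V → V → V → Prop) : Set (Sym2 V) :=
  {e | ∃ u v, e = s(u, v) ∧ G.Adj u v ∧ InV1 G pref u ∧ InV1 G pref v ∧
    (∀ w, InV0 G pref w → G.Adj u w → pref u v w) ∧
    (∀ w, InV0 G pref w → G.Adj v w → pref v u w)}


lemma pref_partner (G : SimpleGraph V) (pref : V → V → V → Prop)
    (hpref : StrictPrefs G pref) {M : Set (Sym2 V)}
    (hM : IsStable G pref M) {u v w : V} (huv : s(u, v) ∈ M) (hw0 : InV0 G pref w)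
    (haw : G.Adj u w) : pref u v w := by
  by_contra hnp
  have hadj : G.Adj u v := hM.2.1 huv
  have hwv : w ≠ v := by
    rintro rfl
    exact hw0 M hM ⟨s(u, w), huv, by simp⟩
  have hwpref : pref u w v := by
    rcases hpref.total u v w hadj haw (Ne.symm hwv) with h | h
    · exact absurd h hnp
    · exact h
  apply hM.2.2 u w
  refine ⟨haw, ?_, ?_, ?_⟩
  · intro hm; exact hw0 M hM ⟨s(u, w), hm, by simp⟩
  · intro z hz
    have heq := hM.1 _ hz _ huv u (by simp) (by simp)
    rcases Sym2.eq_iff.mp heq with ⟨_, rfl⟩ | ⟨huv', _⟩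
    · exact hwpref
    · exact absurd huv' hadj.ne
  · intro z hz; exact absurd ⟨s(w, z), hz, by simp⟩ (hw0 M hM)

lemma E1_pref (G : SimpleGraph V) (pref : V → V → V → Prop) {u v w : V}
    (h : s(u, v) ∈ E1set G pref) (hw0 : InV0 G pref w) (haw : G.Adj u w) :
    pref u v w := by
  obtain ⟨a, b, heq, _, _, _, ha, hb⟩ := h
  rcases Sym2.eq_iff.mp heq with ⟨rfl, rfl⟩ | ⟨rfl, rfl⟩
  · exact ha w hw0 haw
  · exact hb w hw0 haw

lemma exists_partner {M : Set (Sym2 V)} {v : V} (h : Covers M v) :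
    ∃ b, s(v, b) ∈ M := by
  obtain ⟨e, he, hv⟩ := h
  induction e using Sym2.ind with
  | _ a b =>
    rcases Sym2.mem_iff.mp hv with rfl | rfl
    · exact ⟨b, he⟩
    · exact ⟨a, by rwa [Sym2.eq_swap] at he⟩

/-- `M` is a stable matching of `(G, ≺)` iff `M` is a stable matching of
`(G¹, ≺)` matching every vertex of `V¹`. -/
theorem stable_iff_perfect_stable_in_G1 (G : SimpleGraph V)
    (pref : V → V → V → Prop) (hpref : StrictPrefs G pref)
    (hex : ∃ M, IsStable G pref M)
    (hpart : ∀ v, InV0 G pref v ∨ InV1 G pref v)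
    (M : Set (Sym2 V)) :
    IsStable G pref M ↔
      (IsStable (G.deleteEdges {e | e ∉ E1set G pref}) pref M ∧
        ∀ x, InV1 G pref x → Covers M x) := by
  have hV01 : ∀ v, InV0 G pref v → InV1 G pref v → False := by
    intro v h0 h1
    obtain ⟨N, hN⟩ := hex
    exact h0 N hN (h1 N hN)
  constructor
  · intro hM
    have hsub : M ⊆ E1set G pref := by
      intro e he
      have heE : e ∈ G.edgeSet := hM.2.1 he
      induction e using Sym2.ind with
      | _ u v =>
        have hadj : G.Adj u v := heE
        have hcu : Covers M u := ⟨s(u, v), he, by simp⟩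
        have hcv : Covers M v := ⟨s(u, v), he, by simp⟩
        have hu1 : InV1 G pref u := (hpart u).resolve_left fun h0 => (h0 M hM) hcu
        have hv1 : InV1 G pref v := (hpart v).resolve_left fun h0 => (h0 M hM) hcv
        refine ⟨u, v, rfl, hadj, hu1, hv1, ?_, ?_⟩
        · intro w hw0 haw; exact pref_partner G pref hpref hM he hw0 haw
        · intro w hw0 haw
          exact pref_partner G pref hpref hM (by rwa [Sym2.eq_swap] at he) hw0 haw
    refine ⟨⟨hM.1, ?_, ?_⟩, ?_⟩
    · intro e he
      rw [SimpleGraph.edgeSet_deleteEdges]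
      exact ⟨hM.2.1 he, fun h => h (hsub he)⟩
    · intro u v hb
      exact hM.2.2 u v ⟨(SimpleGraph.deleteEdges_adj.mp hb.1).1, hb.2⟩
    · intro x hx; exact hx M hM
  · rintro ⟨hM1, hcov⟩
    have hsub : M ⊆ E1set G pref := by
      intro e he
      have h := hM1.2.1 he
      rw [SimpleGraph.edgeSet_deleteEdges] at h
      simpa using h.2
    refine ⟨hM1.1, fun e he => ((SimpleGraph.edgeSet_deleteEdges _) ▸ hM1.2.1 he).1, ?_⟩
    rintro u v ⟨hadj, hnm, hpu, hpv⟩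
    rcases hpart u with h0u | h1u
    · rcases hpart v with h0v | h1v
      · -- both unmatched in every stable matching: blocking pair for any stable N
        obtain ⟨N, hN⟩ := hex
        apply hN.2.2 u v
        refine ⟨hadj, ?_, ?_, ?_⟩
        · intro hm; exact h0u N hN ⟨s(u, v), hm, by simp⟩
        · intro z hz; exact absurd ⟨s(u, z), hz, by simp⟩ (h0u N hN)
        · intro z hz; exact absurd ⟨s(v, z), hz, by simp⟩ (h0v N hN)
      · -- u ∈ V0, v ∈ V1
        obtain ⟨b, hb⟩ := exists_partner (hcov v h1v)
        have h1 : pref v b u := E1_pref G pref (hsub hb) h0u hadj.symm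
        have h2 : pref v u b := hpv b hb
        exact hpref.irrefl v u (hpref.trans v u b u h2 h1)
    · rcases hpart v with h0v | h1v
      · -- u ∈ V1, v ∈ V0
        obtain ⟨a, ha⟩ := exists_partner (hcov u h1u)
        have h1 : pref u a v := E1_pref G pref (hsub ha) h0v hadj
        have h2 : pref u v a := hpu a ha
        exact hpref.irrefl u v (hpref.trans u v a v h2 h1)
      · -- both in V1: uv ∈ E1, blocking for M in G1
        obtain ⟨a, ha⟩ := exists_partner (hcov u h1u)
        obtain ⟨b, hb⟩ := exists_partner (hcov v h1v)
        have hE1 : s(u, v) ∈ E1set G pref := by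
          refine ⟨u, v, rfl, hadj, h1u, h1v, ?_, ?_⟩
          · intro w hw0 haw
            exact hpref.trans u v a w (hpu a ha) (E1_pref G pref (hsub ha) hw0 haw)
          · intro w hw0 haw
            exact hpref.trans v u b w (hpv b hb) (E1_pref G pref (hsub hb) hw0 haw)
        apply hM1.2.2 u v
        refine ⟨?_, hnm, hpu, hpv⟩
        rw [SimpleGraph.deleteEdges_adj]
        exact ⟨hadj, by simp [hE1]⟩
end

section
/- Let (G, ≺) be a stable matching instance where all stable matchings are perfect, E_M the set of edges in some stable matching, and e = uv ∈ E \ E_M with u the least preferred neighbor of v in G. Let f = wv where w is the least preferred E_M-neighbor of v. Then φ(f) ∩ E_M ⊆ φ(e) ∩ E_M, i.e., in the polytope {x ∈ ℝ^{E_M} : x ≥ 0, x(δ(v) ∩ E_M) ≤ 1 ∀v, x(φ(g) ∩ E_M) ≥ 1 ∀g ∈ E}, the stability inequality for e is implied by the one for f. -/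
open SimpleGraph

variable {V : Type*} [Fintype V] [DecidableEq V]

section Aux

variable {G : SimpleGraph V} {pref : V → V → V → Prop}

lemma unique_partner {M : Set (Sym2 V)} (hM : IsStable G pref M) {x a b : V}
    (ha : s(x, a) ∈ M) (hb : s(x, b) ∈ M) : a = b := by
  have h := hM.1 _ ha _ hb x (by simp) (by simp)
  exact Sym2.congr_right.1 h

lemma adj_of_mem {M : Set (Sym2 V)} (hM : IsStable G pref M) {x a : V}
    (ha : s(x, a) ∈ M) : G.Adj x a :=
  (SimpleGraph.mem_edgeSet G).1 (hM.2.1 ha)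

/-- Propagation step along an alternating path: if `c` is matched to `b` in stable `N₁`
and prefers `d` (its partner in another matching), then `d` prefers its `N₁`-partner `e`
over `c`. -/
lemma step_lemma (hpref : StrictPrefs G pref)
    {N₁ : Set (Sym2 V)} (hN₁ : IsStable G pref N₁)
    {b c d e : V} (hbc : s(b, c) ∈ N₁) (hAdj : G.Adj c d) (hdb : d ≠ b)
    (hpcdb : pref c d b) (hde : s(d, e) ∈ N₁) : e ≠ c ∧ pref d e c := by
  have hcb : s(c, b) ∈ N₁ := Sym2.eq_swap ▸ hbc
  have hnotin : s(c, d) ∉ N₁ := fun h => hdb (unique_partner hN₁ h hcb)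
  have hnb := hN₁.2.2 c d
  unfold Blocks at hnb
  push_neg at hnb
  obtain ⟨t, ht, hnp⟩ := hnb hAdj hnotin (fun t ht => by
    have : t = b := unique_partner hN₁ ht hcb
    subst this; exact hpcdb)
  have hte : t = e := unique_partner hN₁ ht hde
  rw [hte] at ht hnp
  have hec : e ≠ c := by
    rintro rfl
    exact hnotin (Sym2.eq_swap ▸ ht)
  have hAde : G.Adj d e := adj_of_mem hN₁ hde
  rcases hpref.total d e c hAde hAdj.symm hec with h | h
  · exact ⟨hec, h⟩
  · exact absurd h hnp

/-- Alternating chain starting with `v, w` then following partner functions `p'` and `p`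
alternately. -/
noncomputable def chainSeq (p p' : V → V) (v w : V) : ℕ → V
  | 0 => v
  | 1 => w
  | (n + 2) => (if n % 2 = 0 then p' else p) (chainSeq p p' v w (n + 1))

/-- Best-worst duality core: if `v` is matched to `w` in stable `M`, and `w` is matched
to `y ≠ v` in stable `M'` with `w` preferring `y` over `v`, then `v`'s partner `z` in
`M'` satisfies `pref v w z`. -/
lemma key_lemma (hpref : StrictPrefs G pref)
    {M M' : Set (Sym2 V)} (hM : IsStable G pref M) (hM' : IsStable G pref M')
    (hMp : ∀ x, Covers M x) (hM'p : ∀ x, Covers M' x)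
    {v w y : V} (hvw : s(v, w) ∈ M) (hwy : s(w, y) ∈ M') (hyv : y ≠ v)
    (hp : pref w y v) : ∃ z, s(v, z) ∈ M' ∧ z ≠ w ∧ pref v w z := by
  have hMex : ∀ x, ∃ t, s(x, t) ∈ M := by
    intro x
    obtain ⟨e, he, hx⟩ := hMp x
    obtain ⟨t, rfl⟩ := Sym2.mem_iff_exists.1 hx
    exact ⟨t, he⟩
  have hM'ex : ∀ x, ∃ t, s(x, t) ∈ M' := by
    intro x
    obtain ⟨e, he, hx⟩ := hM'p x
    obtain ⟨t, rfl⟩ := Sym2.mem_iff_exists.1 hx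
    exact ⟨t, he⟩
  set p : V → V := fun x => (hMex x).choose with hpdef
  set p' : V → V := fun x => (hM'ex x).choose with hp'def
  have hpx : ∀ x, s(x, p x) ∈ M := fun x => (hMex x).choose_spec
  have hp'x : ∀ x, s(x, p' x) ∈ M' := fun x => (hM'ex x).choose_spec
  have hpp : ∀ x, p (p x) = x := fun x =>
    unique_partner hM (hpx (p x)) (Sym2.eq_swap ▸ hpx x)
  have hp'p' : ∀ x, p' (p' x) = x := fun x =>
    unique_partner hM' (hp'x (p' x)) (Sym2.eq_swap ▸ hp'x x)
  set a : ℕ → V := chainSeq p p' v w with hadef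
  have ha0 : a 0 = v := rfl
  have ha1 : a 1 = w := rfl
  have hastep : ∀ n, a (n + 2) = (if n % 2 = 0 then p' else p) (a (n + 1)) :=
    fun n => rfl
  -- the invariant
  have J : ∀ n, s(a n, a (n + 1)) ∈ (if n % 2 = 0 then M else M') ∧
      a (n + 2) ≠ a n ∧ pref (a (n + 1)) (a (n + 2)) (a n) := by
    intro n
    induction n with
    | zero =>
      have h2 : a 2 = p' w := by rw [hastep 0]; simp [ha1]
      have hpw : p' w = y := unique_partner hM' (hp'x w) hwy
      refine ⟨by simpa [ha0, ha1] using hvw, ?_, ?_⟩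
      · rw [h2, hpw, ha0]; exact hyv
      · rw [h2, hpw, ha0, ha1]; exact hp
    | succ n ih =>
      obtain ⟨h1, h2, h3⟩ := ih
      rcases Nat.mod_two_eq_zero_or_one n with hn | hn
      · -- n even: s(a n, a(n+1)) ∈ M, a(n+2) = p'(a(n+1)), a(n+3) = p(a(n+2))
        rw [if_pos hn] at h1
        have hcd : s(a (n + 1), a (n + 2)) ∈ M' := by
          rw [hastep n, if_pos hn]; exact hp'x (a (n + 1))
        have hde : s(a (n + 2), a (n + 3)) ∈ M := by
          rw [hastep (n + 1), if_neg (by omega)]; exact hpx (a (n + 2))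
        have hAdj : G.Adj (a (n + 1)) (a (n + 2)) := adj_of_mem hM' hcd
        obtain ⟨hec, hpr⟩ := step_lemma hpref hM h1 hAdj h2 h3 hde
        exact ⟨by rw [if_neg (by omega)]; exact hcd, hec, hpr⟩
      · rw [if_neg (by omega)] at h1
        have hcd : s(a (n + 1), a (n + 2)) ∈ M := by
          rw [hastep n, if_neg (by omega)]; exact hpx (a (n + 1))
        have hde : s(a (n + 2), a (n + 3)) ∈ M' := by
          rw [hastep (n + 1), if_pos (by omega)]; exact hp'x (a (n + 2))
        have hAdj : G.Adj (a (n + 1)) (a (n + 2)) := adj_of_mem hM hcd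
        obtain ⟨hec, hpr⟩ := step_lemma hpref hM' h1 hAdj h2 h3 hde
        exact ⟨by rw [if_pos (by omega)]; exact hcd, hec, hpr⟩
  -- closed form on odd indices
  have hodd : ∀ k, a (2 * k + 1) = (p ∘ p')^[k] w := by
    intro k
    induction k with
    | zero => simpa using ha1
    | succ k ih =>
      have e1 : a (2 * k + 2) = p' (a (2 * k + 1)) := by
        rw [hastep (2 * k), if_pos (by omega)]
      have e2 : a (2 * k + 3) = p (a (2 * k + 2)) := by
        rw [hastep (2 * k + 1), if_neg (by omega)]
      have : 2 * (k + 1) + 1 = 2 * k + 3 := by omega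
      rw [this, e2, e1, ih, Function.iterate_succ_apply']
      rfl
  -- injectivity of p ∘ p'
  have hpinj : Function.Injective p := Function.LeftInverse.injective hpp
  have hp'inj : Function.Injective p' := Function.LeftInverse.injective hp'p'
  have hginj : Function.Injective (p ∘ p') := hpinj.comp hp'inj
  -- the orbit of w returns to w
  have hret : ∃ m, 0 < m ∧ (p ∘ p')^[m] w = w := by
    have hni : ¬ Function.Injective
        (fun k : Fin (Fintype.card V + 1) => (p ∘ p')^[(k : ℕ)] w) := by
      intro h
      have := Fintype.card_le_of_injective _ h
      simp at this
    rw [Function.not_injective_iff] at hni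
    obtain ⟨i, j, hij, hne⟩ := hni
    rcases Nat.lt_or_ge (i : ℕ) (j : ℕ) with h | h
    · refine ⟨(j : ℕ) - (i : ℕ), by omega, ?_⟩
      apply hginj.iterate (i : ℕ)
      rw [← Function.iterate_add_apply]
      have : (i : ℕ) + ((j : ℕ) - (i : ℕ)) = (j : ℕ) := by omega
      rw [this, hij]
    · have hlt : (j : ℕ) < (i : ℕ) := by
        rcases Nat.lt_or_ge (j : ℕ) (i : ℕ) with h' | h'
        · exact h'
        · exact absurd (Fin.ext (by omega)) hne
      refine ⟨(i : ℕ) - (j : ℕ), by omega, ?_⟩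
      apply hginj.iterate (j : ℕ)
      rw [← Function.iterate_add_apply]
      have : (j : ℕ) + ((i : ℕ) - (j : ℕ)) = (i : ℕ) := by omega
      rw [this, hij]
  obtain ⟨m, hm, hmw⟩ := hret
  obtain ⟨m', rfl⟩ : ∃ m', m = m' + 1 := ⟨m - 1, by omega⟩
  have hw : a (2 * m' + 3) = w := by
    have : 2 * (m' + 1) + 1 = 2 * m' + 3 := by omega
    rw [← this, hodd]; exact hmw
  have e2 : a (2 * m' + 3) = p (a (2 * m' + 2)) := by
    rw [hastep (2 * m' + 1), if_neg (by omega)]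
  have e1 : a (2 * m' + 2) = p' (a (2 * m' + 1)) := by
    rw [hastep (2 * m'), if_pos (by omega)]
  have hpw : p w = v := unique_partner hM (hpx w) (Sym2.eq_swap ▸ hvw)
  have hav : a (2 * m' + 2) = v := by
    have : p (a (2 * m' + 2)) = w := by rw [← e2, hw]
    have h2 := congrArg p this
    rwa [hpp, hpw] at h2
  obtain ⟨j1, j2, j3⟩ := J (2 * m' + 1)
  rw [if_neg (by omega)] at j1
  refine ⟨a (2 * m' + 1), ?_, ?_, ?_⟩
  · rw [← hav]; exact Sym2.eq_swap ▸ j1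
  · intro h
    exact j2 (by rw [show 2 * m' + 1 + 2 = 2 * m' + 3 from rfl, hw, h])
  · have := j3
    rwa [show 2 * m' + 1 + 1 = 2 * m' + 2 from rfl,
      show 2 * m' + 1 + 2 = 2 * m' + 3 from rfl, hav, hw] at this

end Aux


/-- for `e = uv ∉ E_M` with `u` the least preferred `G`-neighbor of `v`,
and `f = vw` with `w` the least preferred `E_M`-neighbor of `v`, the stability
inequality for `e` is dominated by the one for `f`: `φ(f) ∩ E_M ⊆ φ(e) ∩ E_M`. -/

theorem dominated_stability_inequality (G : SimpleGraph V)
    (pref : V → V → V → Prop) (hpref : StrictPrefs G pref)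
    (hperf : ∀ M, IsStable G pref M → ∀ x, Covers M x)
    (hex : ∃ M, IsStable G pref M)
    (u v w : V) (huv : G.Adj u v) (hnot : s(u, v) ∉ EMset G pref)
    (hworst : ∀ y, G.Adj v y → y ≠ u → pref v y u)
    (hwEM : s(v, w) ∈ EMset G pref)
    (hworstEM : ∀ y, s(v, y) ∈ EMset G pref → y ≠ w → pref v y w) :
    Phi G pref v w ∩ EMset G pref ⊆ Phi G pref u v ∩ EMset G pref := by
  rintro g ⟨⟨hgE, hgcase⟩, hgM⟩
  have hvw_ne_u : w ≠ u := by
    rintro rfl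
    exact hnot (Sym2.eq_swap ▸ hwEM)
  obtain ⟨Mw, hMw, hvwMw⟩ := hwEM
  have hAdjvw : G.Adj v w := adj_of_mem hMw hvwMw
  refine ⟨⟨hgE, ?_⟩, hgM⟩
  rcases hgcase with h | ⟨z, rfl, hz⟩ | ⟨z, rfl, hz⟩
  · -- g = s(v, w)
    exact Or.inr (Or.inr ⟨w, h, hworst w hAdjvw hvw_ne_u⟩)
  · -- g = s(v, z), pref v z w
    have hAdjvz : G.Adj v z := hpref.adj_left v z w hz
    have hz_ne_u : z ≠ u := by
      rintro rfl
      exact hnot (Sym2.eq_swap ▸ hgM)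
    exact Or.inr (Or.inr ⟨z, rfl, hworst z hAdjvz hz_ne_u⟩)
  · -- g = s(w, z), pref w z v
    by_cases hzv : z = v
    · subst hzv
      exact Or.inr (Or.inr ⟨w, Sym2.eq_swap, hworst w hAdjvw hvw_ne_u⟩)
    · exfalso
      obtain ⟨M', hM', hwzM'⟩ := hgM
      obtain ⟨t, htM', htw, hpt⟩ := key_lemma hpref hMw hM'
        (hperf Mw hMw) (hperf M' hM') hvwMw hwzM' hzv hz
      have htEM : s(v, t) ∈ EMset G pref := ⟨M', hM', htM'⟩
      have := hpref.trans v w t w hpt (hworstEM t htEM htw)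
      exact hpref.irrefl v w this
end
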